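/- arXiv:2208.02933 — 5 statements merged into one kernel-verified Lean document; each statement's English description precedes it below -/
import Mathlib

section
/- The real symmetric 2×2 matrix A with A₀₀ = A₁₁ = 0 and A₀₁ = A₁₀ = 1 admits no decomposition A = L * D * Lᵀ where L is a lower-triangular 2×2 matrix with strictly positive diagonal entries and D is a diagonal matrix with diagonal entries in {1, −1}. -/
open Matrix

/-- The symmetric matrix `!![0, 1; 1, 0]` admits no `L * D * Lᵀ` decomposition with `L`
lower triangular with strictly positive diagonal and `D` diagonal with entries in
`{1, -1}`. -/
theorem no_ldl_decomposition_of_null_metric :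
    ¬ ∃ (L D : Matrix (Fin 2) (Fin 2) ℝ),
      (∀ i j : Fin 2, i < j → L i j = 0) ∧
      (∀ i : Fin 2, 0 < L i i) ∧
      (∀ i j : Fin 2, i ≠ j → D i j = 0) ∧
      (∀ i : Fin 2, D i i = 1 ∨ D i i = -1) ∧
      (!![0, 1; 1, 0] : Matrix (Fin 2) (Fin 2) ℝ) = L * D * Lᵀ := by
  rintro ⟨L, D, hL, hLd, hD, hDd, hEq⟩
  have h01 : L 0 1 = 0 := hL 0 1 (by decide)
  have hD01 : D 0 1 = 0 := hD 0 1 (by decide)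
  have h00 : (0:ℝ) = L 0 0 * D 0 0 * L 0 0 := by
    have := congrFun (congrFun hEq 0) 0
    simpa [Matrix.mul_apply, Fin.sum_univ_two, h01, hD01] using this
  have hpos := hLd 0
  rcases hDd 0 with h | h <;> rw [h] at h00 <;> nlinarith
end

section
/- If A is a real lower-triangular n×n matrix, then its matrix exponential exp(A) is lower triangular, and for every index i the diagonal entry satisfies (exp A) i i = Real.exp (A i i); in particular every diagonal entry of exp(A) is strictly positive. -/
/-!
Lower-triangular matrices form a closed subalgebra, so it contains `exp A`. On matrices that
are triangular for an injective block map `b` the diagonal is moreover multiplicative: in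
`(M * N) i i = ∑ k, M i k * N k i` every term with `k ≠ i` vanishes, because either
`b k < b i` or `b i < b k`. Hence `(M ^ k).diag = M.diag ^ k`, and applying `diag` termwise
to the exponential series gives `(exp M).diag = exp M.diag`.
-/

open scoped Nat

namespace Matrix

variable {m α : Type*} [Fintype m] [LinearOrder α] {b : m → α}

theorem BlockTriangular.diag_mul_of_injective {R : Type*} [NonUnitalNonAssocSemiring R]
    {M N : Matrix m m R} (hM : M.BlockTriangular b) (hN : N.BlockTriangular b)
    (hb : Function.Injective b) :
    (M * N).diag = M.diag * N.diag := by
  ext i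
  refine (Finset.sum_eq_single i (fun k _ hki => ?_) (by simp)).trans rfl
  change M i k * N k i = 0
  rcases (hb.ne hki).lt_or_gt with hlt | hgt
  · rw [hM hlt, zero_mul]
  · rw [hN hgt, mul_zero]

variable [DecidableEq m]

theorem BlockTriangular.diag_pow_of_injective {R : Type*} [Semiring R] {M : Matrix m m R}
    (hM : M.BlockTriangular b) (hb : Function.Injective b) (k : ℕ) :
    (M ^ k).diag = M.diag ^ k := by
  induction k with
  | zero => ext i; simp
  | succ k ih => rw [pow_succ, (hM.pow k).diag_mul_of_injective hM hb, ih, pow_succ]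

variable {𝕜 : Type*} [RCLike 𝕜]

-- `NormedSpace.exp` only depends on the topology, so any algebra norm inducing it may be used.
theorem exp_series_hasSum_exp (M : Matrix m m 𝕜) :
    HasSum (fun k => (k ! : 𝕜)⁻¹ • M ^ k) (NormedSpace.exp M) :=
  open scoped Norms.Operator in NormedSpace.exp_series_hasSum_exp' M

theorem BlockTriangular.diag_exp_of_injective {M : Matrix m m 𝕜} (hM : M.BlockTriangular b)
    (hb : Function.Injective b) :
    (NormedSpace.exp M).diag = NormedSpace.exp M.diag := by
  have h := (exp_series_hasSum_exp M).matrix_diag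
  simp only [diag_smul, hM.diag_pow_of_injective hb] at h
  exact h.unique (NormedSpace.exp_series_hasSum_exp' M.diag)

theorem IsLowerTriangular.exp_apply_self [LinearOrder m] {M : Matrix m m 𝕜}
    (hM : M.IsLowerTriangular) (i : m) :
    NormedSpace.exp M i i = NormedSpace.exp (M i i) := by
  rw [← diag_apply (NormedSpace.exp M),
    BlockTriangular.diag_exp_of_injective hM OrderDual.toDual.injective, Pi.coe_exp, diag_apply]

end Matrix

/-- If `A` is a real lower-triangular `n × n` matrix, then its matrix exponential
`exp A` is lower triangular, its diagonal entries are `Real.exp (A i i)`, and in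
particular they are strictly positive. -/
theorem exp_of_lower_triangular (n : ℕ) (A : Matrix (Fin n) (Fin n) ℝ)
    (hA : ∀ i j : Fin n, i < j → A i j = 0) :
    (∀ i j : Fin n, i < j → NormedSpace.exp A i j = 0) ∧
    (∀ i : Fin n, NormedSpace.exp A i i = Real.exp (A i i)) ∧
    (∀ i : Fin n, 0 < NormedSpace.exp A i i) := by
  have hL : A.IsLowerTriangular := fun i j hij => hA i j hij
  have hdiag (i : Fin n) : NormedSpace.exp A i i = Real.exp (A i i) := by
    rw [hL.exp_apply_self, Real.exp_eq_exp_ℝ]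
  exact ⟨fun i j hij => hL.exp hij, hdiag, fun i => hdiag i ▸ Real.exp_pos _⟩
end

section
/- For every n, the matrix exponential restricts to a bijection from the set of real lower-triangular n×n matrices onto the set of real lower-triangular n×n matrices with strictly positive diagonal entries. -/
/-!
Write `M.IsLowerFrom k` when the entries of `M` vanish above its `k`-th subdiagonal. For lower
triangular `A`, `B` with `(A - B).IsLowerFrom k`, the expansion
`A ^ m - B ^ m = ∑ p, A ^ p * (A - B) * B ^ (m - 1 - p)` shows that `exp A - exp B` is
`IsLowerFrom k` too, and that on the `k`-th subdiagonal `(exp A - exp B) i j = δ * (A - B) i j`,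
where `δ = (exp (A i i) - exp (B j j)) / (A i i - B j j)` is a divided difference of `Real.exp`
and hence never zero. So once the subdiagonals above the `k`-th are fixed, the `k`-th subdiagonal
of `exp A` depends bijectively on that of `A`: induction on `k` gives injectivity, and solving
one subdiagonal at a time, starting from the diagonal matrix of the `log (L i i)`, gives a
logarithm of `L`.
-/

open NormedSpace Finset
open scoped Nat

theorem pow_sub_pow_eq_sum {R : Type*} [Ring R] (a b : R) (m : ℕ) :
    a ^ m - b ^ m = ∑ p ∈ range m, a ^ p * (a - b) * b ^ (m - 1 - p) := by
  induction m with
  | zero => simp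
  | succ m ih =>
    have hshift : ∑ p ∈ range m, a ^ p * (a - b) * b ^ (m - p)
        = (∑ p ∈ range m, a ^ p * (a - b) * b ^ (m - 1 - p)) * b := by
      rw [sum_mul]
      refine sum_congr rfl fun p hp => ?_
      rw [mul_assoc _ _ b, ← pow_succ]
      congr 2
      have := mem_range.1 hp
      omega
    rw [sum_range_succ, Nat.add_sub_cancel, Nat.sub_self, pow_zero, mul_one, hshift, ← ih]
    noncomm_ring

theorem Real.hasSum_exp (x : ℝ) : HasSum (fun m => (m ! : ℝ)⁻¹ * x ^ m) (Real.exp x) := by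
  simpa [Real.exp_eq_exp_ℝ] using exp_series_hasSum_exp' (𝕂 := ℝ) x

theorem Real.hasSum_dslope_exp (x y : ℝ) :
    HasSum (fun m => (m ! : ℝ)⁻¹ * ∑ p ∈ range m, x ^ p * y ^ (m - 1 - p))
      (dslope Real.exp y x) := by
  rcases eq_or_ne x y with rfl | hxy
  · rw [dslope_same, Real.deriv_exp]
    refine (hasSum_nat_add_iff' 1).1 ?_
    rw [sum_range_one, sum_range_zero, mul_zero, sub_zero]
    refine (Real.hasSum_exp x).congr_fun fun m => ?_
    rw [geom_sum₂_self, Nat.factorial_succ, Nat.add_sub_cancel]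
    push_cast
    field_simp
  · have hsub := ((Real.hasSum_exp x).sub (Real.hasSum_exp y)).div_const (x - y)
    rw [dslope_of_ne _ hxy, slope_def_field]
    refine hsub.congr_fun fun m => ?_
    rw [← mul_sub, mul_div_assoc, ← geom_sum₂_mul,
      mul_div_cancel_right₀ _ (sub_ne_zero.2 hxy)]

theorem Real.dslope_exp_ne_zero (x y : ℝ) : dslope Real.exp y x ≠ 0 := by
  rcases eq_or_ne x y with rfl | hxy
  · simp [dslope_same, Real.exp_ne_zero]
  · intro h
    have := sub_smul_dslope Real.exp y x
    rw [h, smul_zero, eq_comm, sub_eq_zero] at this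
    exact hxy (Real.exp_injective this)

namespace Matrix

variable {n k : ℕ} {R : Type*}

def IsLowerFrom [Zero R] (M : Matrix (Fin n) (Fin n) R) (k : ℕ) : Prop :=
  ∀ i j : Fin n, (i : ℕ) < j + k → M i j = 0

theorem hasSum_exp_apply {ι : Type*} [Fintype ι] [DecidableEq ι] (A : Matrix ι ι ℝ)
    (i j : ι) : HasSum (fun m => (m ! : ℝ)⁻¹ * (A ^ m) i j) (exp A i j) := by
  -- `exp` depends only on the topology, so any submultiplicative norm will do.
  let : NormedRing (Matrix ι ι ℝ) := Matrix.linftyOpNormedRing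
  let : NormedAlgebra ℝ (Matrix ι ι ℝ) := Matrix.linftyOpNormedAlgebra
  exact Pi.hasSum.1 (Pi.hasSum.1 (exp_series_hasSum_exp' (𝕂 := ℝ) A) i) j

theorem hasSum_exp_sub_exp_apply {ι : Type*} [Fintype ι] [DecidableEq ι]
    (A B : Matrix ι ι ℝ) (i j : ι) :
    HasSum (fun m => (m ! : ℝ)⁻¹ * (A ^ m - B ^ m) i j) ((exp A - exp B) i j) := by
  simpa only [sub_apply, mul_sub] using (hasSum_exp_apply A i j).sub (hasSum_exp_apply B i j)

namespace IsLowerFrom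

theorem mono [Zero R] {M : Matrix (Fin n) (Fin n) R} {l : ℕ} (hM : M.IsLowerFrom l)
    (hkl : k ≤ l) : M.IsLowerFrom k :=
  fun i j hij => hM i j (by omega)

theorem eq_zero [Zero R] {M : Matrix (Fin n) (Fin n) R} (hM : M.IsLowerFrom n) : M = 0 :=
  ext fun i j => hM i j (by omega)

theorem sub [AddGroup R] {M N : Matrix (Fin n) (Fin n) R} (hM : M.IsLowerFrom k)
    (hN : N.IsLowerFrom k) : (M - N).IsLowerFrom k := fun i j hij => by
  rw [sub_apply, hM i j hij, hN i j hij, sub_zero]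

theorem sum [AddCommMonoid R] {ι : Type*} {s : Finset ι} {M : ι → Matrix (Fin n) (Fin n) R}
    (hM : ∀ x ∈ s, (M x).IsLowerFrom k) : (∑ x ∈ s, M x).IsLowerFrom k :=
  fun i j hij => by rw [sum_apply]; exact sum_eq_zero fun x hx => hM x hx i j hij

theorem one [Zero R] [One R] : (1 : Matrix (Fin n) (Fin n) R).IsLowerFrom 0 :=
  fun _ _ hij => one_apply_ne (Fin.ne_of_lt hij)

theorem mul [NonUnitalNonAssocSemiring R] {P Q : Matrix (Fin n) (Fin n) R} {a b : ℕ}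
    (hP : P.IsLowerFrom a) (hQ : Q.IsLowerFrom b) : (P * Q).IsLowerFrom (a + b) :=
  fun i j hij => mul_apply.trans <| sum_eq_zero fun l _ => by
    rcases lt_or_ge (i : ℕ) (l + a) with hil | hli
    · rw [hP i l hil, zero_mul]
    · rw [hQ l j (by omega), mul_zero]

theorem succ [Zero R] {M : Matrix (Fin n) (Fin n) R} (hM : M.IsLowerFrom k)
    (hk : ∀ i j : Fin n, (i : ℕ) = j + k → M i j = 0) : M.IsLowerFrom (k + 1) :=
  fun i j hij => (Nat.lt_or_eq_of_le (Nat.le_of_lt_succ hij)).elim (hM i j) (hk i j)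

theorem pow [Semiring R] {A : Matrix (Fin n) (Fin n) R} (hA : A.IsLowerFrom 0) (m : ℕ) :
    (A ^ m).IsLowerFrom 0 := by
  induction m with
  | zero => exact one
  | succ m ih => rw [pow_succ]; exact ih.mul hA

theorem mul_apply_of_left [NonUnitalNonAssocSemiring R] {P E : Matrix (Fin n) (Fin n) R}
    (hP : P.IsLowerFrom 0) (hE : E.IsLowerFrom k) {i j : Fin n} (hij : (i : ℕ) = j + k) :
    (P * E) i j = P i i * E i j :=
  mul_apply.trans <| sum_eq_single i (fun l _ hli => by
      rcases lt_or_gt_of_ne hli with hli | hil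
      · rw [hE l j (by omega), mul_zero]
      · rw [hP i l (by simpa using hil), zero_mul])
    (by simp)

theorem mul_apply_of_right [NonUnitalNonAssocSemiring R] {E Q : Matrix (Fin n) (Fin n) R}
    (hE : E.IsLowerFrom k) (hQ : Q.IsLowerFrom 0) {i j : Fin n} (hij : (i : ℕ) = j + k) :
    (E * Q) i j = E i j * Q j j :=
  mul_apply.trans <| sum_eq_single j (fun l _ hlj => by
      rcases lt_or_gt_of_ne hlj with hlj | hjl
      · rw [hQ l j (by simpa using hlj), mul_zero]
      · rw [hE i l (by omega), zero_mul])
    (by simp)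

theorem pow_apply_self [Semiring R] {A : Matrix (Fin n) (Fin n) R} (hA : A.IsLowerFrom 0)
    (m : ℕ) (i : Fin n) : (A ^ m) i i = A i i ^ m := by
  induction m with
  | zero => simp
  | succ m ih => rw [pow_succ, (hA.pow m).mul_apply_of_right hA rfl, ih, pow_succ]

section CommRing

variable [CommRing R] {A B : Matrix (Fin n) (Fin n) R}

theorem pow_sub_pow (hA : A.IsLowerFrom 0) (hB : B.IsLowerFrom 0) (hAB : (A - B).IsLowerFrom k)
    (m : ℕ) : (A ^ m - B ^ m).IsLowerFrom k := by
  rw [pow_sub_pow_eq_sum]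
  exact sum fun p _ => by simpa using ((hA.pow p).mul hAB).mul (hB.pow _)

theorem pow_sub_pow_apply (hA : A.IsLowerFrom 0) (hB : B.IsLowerFrom 0)
    (hAB : (A - B).IsLowerFrom k) {i j : Fin n} (hij : (i : ℕ) = j + k) (m : ℕ) :
    (A ^ m - B ^ m) i j = (∑ p ∈ range m, A i i ^ p * B j j ^ (m - 1 - p)) * (A - B) i j := by
  rw [pow_sub_pow_eq_sum, sum_apply, sum_mul]
  refine sum_congr rfl fun p _ => ?_
  have hAp : (A ^ p * (A - B)).IsLowerFrom k := by simpa using (hA.pow p).mul hAB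
  rw [hAp.mul_apply_of_right (hB.pow _) hij, (hA.pow p).mul_apply_of_left hAB hij,
    hA.pow_apply_self, hB.pow_apply_self]
  ring

end CommRing

section Exp

variable {A B : Matrix (Fin n) (Fin n) ℝ}

theorem exp_sub_exp (hA : A.IsLowerFrom 0) (hB : B.IsLowerFrom 0)
    (hAB : (A - B).IsLowerFrom k) : (exp A - exp B).IsLowerFrom k := fun i j hij =>
  (hasSum_exp_sub_exp_apply A B i j).unique <| by
    simp [hA.pow_sub_pow hB hAB _ i j hij, hasSum_zero]

theorem exp_sub_exp_apply (hA : A.IsLowerFrom 0) (hB : B.IsLowerFrom 0)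
    (hAB : (A - B).IsLowerFrom k) {i j : Fin n} (hij : (i : ℕ) = j + k) :
    (exp A - exp B) i j = dslope Real.exp (B j j) (A i i) * (A - B) i j :=
  (hasSum_exp_sub_exp_apply A B i j).unique <| by
    simpa only [hA.pow_sub_pow_apply hB hAB hij, ← mul_assoc] using
      (Real.hasSum_dslope_exp (A i i) (B j j)).mul_right ((A - B) i j)

theorem exp_apply_self (hA : A.IsLowerFrom 0) (i : Fin n) : exp A i i = Real.exp (A i i) :=
  (hasSum_exp_apply A i i).unique <| by
    simpa only [hA.pow_apply_self] using Real.hasSum_exp (A i i)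

theorem exp (hA : A.IsLowerFrom 0) : (exp A).IsLowerFrom 0 := fun _ _ hij =>
  BlockTriangular.exp (b := OrderDual.toDual) (fun _ _ h => hA _ _ h) hij

end Exp

end IsLowerFrom

theorem exists_exp_sub_isLowerFrom_succ {A L : Matrix (Fin n) (Fin n) ℝ} (hk : k ≠ 0)
    (hA : A.IsLowerFrom 0) (hL : (exp A - L).IsLowerFrom k) :
    ∃ A' : Matrix (Fin n) (Fin n) ℝ, A'.IsLowerFrom 0 ∧ (exp A' - L).IsLowerFrom (k + 1) := by
  -- Since `k ≠ 0`, this correction leaves the diagonal of `A`, hence the divided differences,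
  -- unchanged.
  let F : Matrix (Fin n) (Fin n) ℝ := of fun i j =>
    if (i : ℕ) = j + k then (exp A - L) i j / dslope Real.exp (A j j) (A i i) else 0
  have hF : F.IsLowerFrom k := fun i j hij => if_neg (by omega)
  have hAF : (A - (A - F)).IsLowerFrom k := by rwa [sub_sub_cancel]
  have hA' : (A - F).IsLowerFrom 0 := hA.sub (hF.mono k.zero_le)
  refine ⟨A - F, hA', ?_⟩
  rw [← sub_sub_sub_cancel_left _ _ (exp A)]
  refine (hL.sub (hA.exp_sub_exp hA' hAF)).succ fun i j hij => ?_
  rw [sub_apply, hA.exp_sub_exp_apply hA' hAF hij, sub_sub_cancel, sub_apply A F j j,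
    hF j j (by omega), sub_zero]
  simp only [F, of_apply, if_pos hij]
  rw [mul_div_cancel₀ _ (Real.dslope_exp_ne_zero _ _), sub_self]

theorem injOn_exp_isLowerFrom :
    Set.InjOn exp {A : Matrix (Fin n) (Fin n) ℝ | A.IsLowerFrom 0} := by
  intro A hA B hB hAB
  have key : ∀ k, (A - B).IsLowerFrom k := by
    intro k
    induction k with
    | zero => exact hA.sub hB
    | succ k ih =>
      refine ih.succ fun i j hij => ?_
      have h := hA.exp_sub_exp_apply hB ih hij
      rw [hAB, sub_self, zero_apply, eq_comm, mul_eq_zero] at h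
      exact h.resolve_left (Real.dslope_exp_ne_zero _ _)
  exact sub_eq_zero.1 (key n).eq_zero

theorem surjOn_exp_isLowerFrom :
    Set.SurjOn exp {A : Matrix (Fin n) (Fin n) ℝ | A.IsLowerFrom 0}
      {L | L.IsLowerFrom 0 ∧ ∀ i, 0 < L i i} := by
  rintro L ⟨hL, hpos⟩
  have key : ∀ k, ∃ A : Matrix (Fin n) (Fin n) ℝ,
      A.IsLowerFrom 0 ∧ (exp A - L).IsLowerFrom (k + 1) := by
    intro k
    induction k with
    | zero =>
      let D := diagonal fun i => Real.log (L i i)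
      have hD : D.IsLowerFrom 0 := fun i j hij => diagonal_apply_ne _ (Fin.ne_of_lt hij)
      refine ⟨D, hD, (hD.exp.sub hL).succ fun i j hij => ?_⟩
      obtain rfl : i = j := Fin.ext (by simpa using hij)
      rw [sub_apply, hD.exp_apply_self]
      simp only [D, diagonal_apply_eq]
      rw [Real.exp_log (hpos i), sub_self]
    | succ k ih =>
      obtain ⟨A, hA, h⟩ := ih
      exact exists_exp_sub_isLowerFrom_succ k.succ_ne_zero hA h
  obtain ⟨A, hA, h⟩ := key n
  exact ⟨A, hA, sub_eq_zero.1 (h.mono n.le_succ).eq_zero⟩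

end Matrix

/-- The matrix exponential restricts to a bijection from the set of real lower-triangular
`n × n` matrices onto the set of real lower-triangular `n × n` matrices with strictly
positive diagonal entries. -/
theorem exp_bijOn_lower_triangular (n : ℕ) :
    Set.BijOn (NormedSpace.exp : Matrix (Fin n) (Fin n) ℝ → Matrix (Fin n) (Fin n) ℝ)
      {A : Matrix (Fin n) (Fin n) ℝ | ∀ i j : Fin n, i < j → A i j = 0}
      {L : Matrix (Fin n) (Fin n) ℝ |
        (∀ i j : Fin n, i < j → L i j = 0) ∧ ∀ i : Fin n, 0 < L i i} := by
  refine ⟨fun _ hA => ⟨Matrix.IsLowerFrom.exp hA, fun i => ?_⟩,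
    Matrix.injOn_exp_isLowerFrom, Matrix.surjOn_exp_isLowerFrom⟩
  rw [Matrix.IsLowerFrom.exp_apply_self hA]
  exact Real.exp_pos _
end

section
/- Let R : Fin 4 → Fin 4 → Fin 4 → Fin 4 → ℝ satisfy R a b k m = −R b a k m and R a b k m = −R a b m k. If for all d, f ∈ Fin 4 one has ∑_{a,b,c,k,m} ε c d a b * ε c f k m * R a b k m = 0, then ∑_{a,b} R a b a b = 0 and, for all f, d ∈ Fin 4, ∑_b R f b b d = 0. -/
/-- The Levi-Civita symbol on `Fin 4`: `levicivita a b c d` is the sign of the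
permutation sending `(0,1,2,3)` to `(a,b,c,d)` when the indices are pairwise distinct,
and `0` otherwise. -/
noncomputable def levicivita (a b c d : Fin 4) : ℝ :=
  ∑ σ : Equiv.Perm (Fin 4),
    if σ 0 = a ∧ σ 1 = b ∧ σ 2 = c ∧ σ 3 = d then ((Equiv.Perm.sign σ : ℤ) : ℝ) else 0

def lcZ (a b c d : Fin 4) : ℤ :=
  ∑ σ : Equiv.Perm (Fin 4),
    if σ 0 = a ∧ σ 1 = b ∧ σ 2 = c ∧ σ 3 = d then ((Equiv.Perm.sign σ : ℤ)) else 0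

def lcF (a b c d : Fin 4) : ℤ :=
  ((b:ℤ)-a)*((c:ℤ)-a)*((d:ℤ)-a)*((c:ℤ)-b)*((d:ℤ)-b)*((d:ℤ)-c)/12

lemma lcZ_eq : ∀ a b c d, lcZ a b c d = lcF a b c d := by decide

lemma lc_cast (a b c d : Fin 4) : levicivita a b c d = ((lcF a b c d : ℤ) : ℝ) := by
  rw [← lcZ_eq]; unfold levicivita lcZ; push_cast [apply_ite]; rfl
lemma lcz_0 (a c d : Fin 4) : levicivita a a c d = 0 := by
  rw [lc_cast, show lcF a a c d = 0 from by revert a c d; decide]; norm_num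
lemma lcz_1 (a b d : Fin 4) : levicivita a b a d = 0 := by
  rw [lc_cast, show lcF a b a d = 0 from by revert a b d; decide]; norm_num
lemma lcz_2 (a b c : Fin 4) : levicivita a b c a = 0 := by
  rw [lc_cast, show lcF a b c a = 0 from by revert a b c; decide]; norm_num
lemma lcz_3 (a b d : Fin 4) : levicivita a b b d = 0 := by
  rw [lc_cast, show lcF a b b d = 0 from by revert a b d; decide]; norm_num
lemma lcz_4 (a b c : Fin 4) : levicivita a b c b = 0 := by
  rw [lc_cast, show lcF a b c b = 0 from by revert a b c; decide]; norm_num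
lemma lcz_5 (a b c : Fin 4) : levicivita a b c c = 0 := by
  rw [lc_cast, show lcF a b c c = 0 from by revert a b c; decide]; norm_num
lemma lc_0123 : levicivita 0 1 2 3 = 1 := by
  rw [lc_cast, show lcF 0 1 2 3 = 1 from by decide]; norm_num
lemma lc_0132 : levicivita 0 1 3 2 = -1 := by
  rw [lc_cast, show lcF 0 1 3 2 = -1 from by decide]; norm_num
lemma lc_0213 : levicivita 0 2 1 3 = -1 := by
  rw [lc_cast, show lcF 0 2 1 3 = -1 from by decide]; norm_num
lemma lc_0231 : levicivita 0 2 3 1 = 1 := by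
  rw [lc_cast, show lcF 0 2 3 1 = 1 from by decide]; norm_num
lemma lc_0312 : levicivita 0 3 1 2 = 1 := by
  rw [lc_cast, show lcF 0 3 1 2 = 1 from by decide]; norm_num
lemma lc_0321 : levicivita 0 3 2 1 = -1 := by
  rw [lc_cast, show lcF 0 3 2 1 = -1 from by decide]; norm_num
lemma lc_1023 : levicivita 1 0 2 3 = -1 := by
  rw [lc_cast, show lcF 1 0 2 3 = -1 from by decide]; norm_num
lemma lc_1032 : levicivita 1 0 3 2 = 1 := by
  rw [lc_cast, show lcF 1 0 3 2 = 1 from by decide]; norm_num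
lemma lc_1203 : levicivita 1 2 0 3 = 1 := by
  rw [lc_cast, show lcF 1 2 0 3 = 1 from by decide]; norm_num
lemma lc_1230 : levicivita 1 2 3 0 = -1 := by
  rw [lc_cast, show lcF 1 2 3 0 = -1 from by decide]; norm_num
lemma lc_1302 : levicivita 1 3 0 2 = -1 := by
  rw [lc_cast, show lcF 1 3 0 2 = -1 from by decide]; norm_num
lemma lc_1320 : levicivita 1 3 2 0 = 1 := by
  rw [lc_cast, show lcF 1 3 2 0 = 1 from by decide]; norm_num
lemma lc_2013 : levicivita 2 0 1 3 = 1 := by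
  rw [lc_cast, show lcF 2 0 1 3 = 1 from by decide]; norm_num
lemma lc_2031 : levicivita 2 0 3 1 = -1 := by
  rw [lc_cast, show lcF 2 0 3 1 = -1 from by decide]; norm_num
lemma lc_2103 : levicivita 2 1 0 3 = -1 := by
  rw [lc_cast, show lcF 2 1 0 3 = -1 from by decide]; norm_num
lemma lc_2130 : levicivita 2 1 3 0 = 1 := by
  rw [lc_cast, show lcF 2 1 3 0 = 1 from by decide]; norm_num
lemma lc_2301 : levicivita 2 3 0 1 = 1 := by
  rw [lc_cast, show lcF 2 3 0 1 = 1 from by decide]; norm_num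
lemma lc_2310 : levicivita 2 3 1 0 = -1 := by
  rw [lc_cast, show lcF 2 3 1 0 = -1 from by decide]; norm_num
lemma lc_3012 : levicivita 3 0 1 2 = -1 := by
  rw [lc_cast, show lcF 3 0 1 2 = -1 from by decide]; norm_num
lemma lc_3021 : levicivita 3 0 2 1 = 1 := by
  rw [lc_cast, show lcF 3 0 2 1 = 1 from by decide]; norm_num
lemma lc_3102 : levicivita 3 1 0 2 = 1 := by
  rw [lc_cast, show lcF 3 1 0 2 = 1 from by decide]; norm_num
lemma lc_3120 : levicivita 3 1 2 0 = -1 := by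
  rw [lc_cast, show lcF 3 1 2 0 = -1 from by decide]; norm_num
lemma lc_3201 : levicivita 3 2 0 1 = -1 := by
  rw [lc_cast, show lcF 3 2 0 1 = -1 from by decide]; norm_num
lemma lc_3210 : levicivita 3 2 1 0 = 1 := by
  rw [lc_cast, show lcF 3 2 1 0 = 1 from by decide]; norm_num

set_option maxHeartbeats 1000000 in
/-- If a curvature-type tensor `R`, antisymmetric in each index pair, satisfies
`ε^{cdab} ε^{cfkm} R_{abkm} = 0` for all `d, f`, then its scalar trace and its
Ricci-type trace vanish. -/
theorem curvature_traces_vanish (R : Fin 4 → Fin 4 → Fin 4 → Fin 4 → ℝ)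
    (h1 : ∀ a b k m, R a b k m = - R b a k m)
    (h2 : ∀ a b k m, R a b k m = - R a b m k)
    (h : ∀ d f : Fin 4,
      ∑ a, ∑ b, ∑ c, ∑ k, ∑ m,
        levicivita c d a b * levicivita c f k m * R a b k m = 0) :
    (∑ a, ∑ b, R a b a b = 0) ∧ (∀ f d : Fin 4, ∑ b, R f b b d = 0) := by
  have hz1 : ∀ a k m, R a a k m = 0 := fun a k m => by linarith [h1 a a k m]
  have hz2 : ∀ a b k, R a b k k = 0 := fun a b k => by linarith [h2 a b k k]
  have c10 : ∀ k m, R 1 0 k m = - R 0 1 k m := fun k m => h1 1 0 k m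
  have c20 : ∀ k m, R 2 0 k m = - R 0 2 k m := fun k m => h1 2 0 k m
  have c21 : ∀ k m, R 2 1 k m = - R 1 2 k m := fun k m => h1 2 1 k m
  have c30 : ∀ k m, R 3 0 k m = - R 0 3 k m := fun k m => h1 3 0 k m
  have c31 : ∀ k m, R 3 1 k m = - R 1 3 k m := fun k m => h1 3 1 k m
  have c32 : ∀ k m, R 3 2 k m = - R 2 3 k m := fun k m => h1 3 2 k m
  have d10 : ∀ a b, R a b 1 0 = - R a b 0 1 := fun a b => h2 a b 1 0
  have d20 : ∀ a b, R a b 2 0 = - R a b 0 2 := fun a b => h2 a b 2 0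
  have d21 : ∀ a b, R a b 2 1 = - R a b 1 2 := fun a b => h2 a b 2 1
  have d30 : ∀ a b, R a b 3 0 = - R a b 0 3 := fun a b => h2 a b 3 0
  have d31 : ∀ a b, R a b 3 1 = - R a b 1 3 := fun a b => h2 a b 3 1
  have d32 : ∀ a b, R a b 3 2 = - R a b 2 3 := fun a b => h2 a b 3 2
  have E00 := h 0 0
  have E01 := h 0 1
  have E02 := h 0 2
  have E03 := h 0 3
  have E10 := h 1 0
  have E11 := h 1 1
  have E12 := h 1 2
  have E13 := h 1 3
  have E20 := h 2 0
  have E21 := h 2 1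
  have E22 := h 2 2
  have E23 := h 2 3
  have E30 := h 3 0
  have E31 := h 3 1
  have E32 := h 3 2
  have E33 := h 3 3
  simp only [Fin.sum_univ_four, lcz_0, lcz_1, lcz_2, lcz_3, lcz_4, lcz_5, lc_0123, lc_0132, lc_0213, lc_0231, lc_0312, lc_0321, lc_1023, lc_1032, lc_1203, lc_1230, lc_1302, lc_1320, lc_2013, lc_2031, lc_2103, lc_2130, lc_2301, lc_2310, lc_3012, lc_3021, lc_3102, lc_3120, lc_3201, lc_3210, hz1, hz2, c10, c20, c21, c30, c31, c32, d10, d20, d21, d30, d31, d32, zero_mul, mul_zero, add_zero, zero_add, one_mul, mul_one, neg_mul, mul_neg, neg_neg, neg_zero, neg_add_rev] at E00 E01 E02 E03 E10 E11 E12 E13 E20 E21 E22 E23 E30 E31 E32 E33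
  have G00 : (Finset.sum Finset.univ fun b => R 0 b b 0) = 0 := by
    simp only [Fin.sum_univ_four, hz1, hz2, c10, c20, c21, c30, c31, c32, d10, d20, d21, d30, d31, d32, zero_mul, mul_zero, add_zero, zero_add, one_mul, mul_one, neg_mul, mul_neg, neg_neg, neg_zero, neg_add_rev]
    linarith [E00, E01, E02, E03, E10, E11, E12, E13, E20, E21, E22, E23, E30, E31, E32, E33]
  have G01 : (Finset.sum Finset.univ fun b => R 0 b b 1) = 0 := by
    simp only [Fin.sum_univ_four, hz1, hz2, c10, c20, c21, c30, c31, c32, d10, d20, d21, d30, d31, d32, zero_mul, mul_zero, add_zero, zero_add, one_mul, mul_one, neg_mul, mul_neg, neg_neg, neg_zero, neg_add_rev]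
    linarith [E00, E01, E02, E03, E10, E11, E12, E13, E20, E21, E22, E23, E30, E31, E32, E33]
  have G02 : (Finset.sum Finset.univ fun b => R 0 b b 2) = 0 := by
    simp only [Fin.sum_univ_four, hz1, hz2, c10, c20, c21, c30, c31, c32, d10, d20, d21, d30, d31, d32, zero_mul, mul_zero, add_zero, zero_add, one_mul, mul_one, neg_mul, mul_neg, neg_neg, neg_zero, neg_add_rev]
    linarith [E00, E01, E02, E03, E10, E11, E12, E13, E20, E21, E22, E23, E30, E31, E32, E33]
  have G03 : (Finset.sum Finset.univ fun b => R 0 b b 3) = 0 := by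
    simp only [Fin.sum_univ_four, hz1, hz2, c10, c20, c21, c30, c31, c32, d10, d20, d21, d30, d31, d32, zero_mul, mul_zero, add_zero, zero_add, one_mul, mul_one, neg_mul, mul_neg, neg_neg, neg_zero, neg_add_rev]
    linarith [E00, E01, E02, E03, E10, E11, E12, E13, E20, E21, E22, E23, E30, E31, E32, E33]
  have G10 : (Finset.sum Finset.univ fun b => R 1 b b 0) = 0 := by
    simp only [Fin.sum_univ_four, hz1, hz2, c10, c20, c21, c30, c31, c32, d10, d20, d21, d30, d31, d32, zero_mul, mul_zero, add_zero, zero_add, one_mul, mul_one, neg_mul, mul_neg, neg_neg, neg_zero, neg_add_rev]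
    linarith [E00, E01, E02, E03, E10, E11, E12, E13, E20, E21, E22, E23, E30, E31, E32, E33]
  have G11 : (Finset.sum Finset.univ fun b => R 1 b b 1) = 0 := by
    simp only [Fin.sum_univ_four, hz1, hz2, c10, c20, c21, c30, c31, c32, d10, d20, d21, d30, d31, d32, zero_mul, mul_zero, add_zero, zero_add, one_mul, mul_one, neg_mul, mul_neg, neg_neg, neg_zero, neg_add_rev]
    linarith [E00, E01, E02, E03, E10, E11, E12, E13, E20, E21, E22, E23, E30, E31, E32, E33]
  have G12 : (Finset.sum Finset.univ fun b => R 1 b b 2) = 0 := by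
    simp only [Fin.sum_univ_four, hz1, hz2, c10, c20, c21, c30, c31, c32, d10, d20, d21, d30, d31, d32, zero_mul, mul_zero, add_zero, zero_add, one_mul, mul_one, neg_mul, mul_neg, neg_neg, neg_zero, neg_add_rev]
    linarith [E00, E01, E02, E03, E10, E11, E12, E13, E20, E21, E22, E23, E30, E31, E32, E33]
  have G13 : (Finset.sum Finset.univ fun b => R 1 b b 3) = 0 := by
    simp only [Fin.sum_univ_four, hz1, hz2, c10, c20, c21, c30, c31, c32, d10, d20, d21, d30, d31, d32, zero_mul, mul_zero, add_zero, zero_add, one_mul, mul_one, neg_mul, mul_neg, neg_neg, neg_zero, neg_add_rev]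
    linarith [E00, E01, E02, E03, E10, E11, E12, E13, E20, E21, E22, E23, E30, E31, E32, E33]
  have G20 : (Finset.sum Finset.univ fun b => R 2 b b 0) = 0 := by
    simp only [Fin.sum_univ_four, hz1, hz2, c10, c20, c21, c30, c31, c32, d10, d20, d21, d30, d31, d32, zero_mul, mul_zero, add_zero, zero_add, one_mul, mul_one, neg_mul, mul_neg, neg_neg, neg_zero, neg_add_rev]
    linarith [E00, E01, E02, E03, E10, E11, E12, E13, E20, E21, E22, E23, E30, E31, E32, E33]
  have G21 : (Finset.sum Finset.univ fun b => R 2 b b 1) = 0 := by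
    simp only [Fin.sum_univ_four, hz1, hz2, c10, c20, c21, c30, c31, c32, d10, d20, d21, d30, d31, d32, zero_mul, mul_zero, add_zero, zero_add, one_mul, mul_one, neg_mul, mul_neg, neg_neg, neg_zero, neg_add_rev]
    linarith [E00, E01, E02, E03, E10, E11, E12, E13, E20, E21, E22, E23, E30, E31, E32, E33]
  have G22 : (Finset.sum Finset.univ fun b => R 2 b b 2) = 0 := by
    simp only [Fin.sum_univ_four, hz1, hz2, c10, c20, c21, c30, c31, c32, d10, d20, d21, d30, d31, d32, zero_mul, mul_zero, add_zero, zero_add, one_mul, mul_one, neg_mul, mul_neg, neg_neg, neg_zero, neg_add_rev]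
    linarith [E00, E01, E02, E03, E10, E11, E12, E13, E20, E21, E22, E23, E30, E31, E32, E33]
  have G23 : (Finset.sum Finset.univ fun b => R 2 b b 3) = 0 := by
    simp only [Fin.sum_univ_four, hz1, hz2, c10, c20, c21, c30, c31, c32, d10, d20, d21, d30, d31, d32, zero_mul, mul_zero, add_zero, zero_add, one_mul, mul_one, neg_mul, mul_neg, neg_neg, neg_zero, neg_add_rev]
    linarith [E00, E01, E02, E03, E10, E11, E12, E13, E20, E21, E22, E23, E30, E31, E32, E33]
  have G30 : (Finset.sum Finset.univ fun b => R 3 b b 0) = 0 := by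
    simp only [Fin.sum_univ_four, hz1, hz2, c10, c20, c21, c30, c31, c32, d10, d20, d21, d30, d31, d32, zero_mul, mul_zero, add_zero, zero_add, one_mul, mul_one, neg_mul, mul_neg, neg_neg, neg_zero, neg_add_rev]
    linarith [E00, E01, E02, E03, E10, E11, E12, E13, E20, E21, E22, E23, E30, E31, E32, E33]
  have G31 : (Finset.sum Finset.univ fun b => R 3 b b 1) = 0 := by
    simp only [Fin.sum_univ_four, hz1, hz2, c10, c20, c21, c30, c31, c32, d10, d20, d21, d30, d31, d32, zero_mul, mul_zero, add_zero, zero_add, one_mul, mul_one, neg_mul, mul_neg, neg_neg, neg_zero, neg_add_rev]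
    linarith [E00, E01, E02, E03, E10, E11, E12, E13, E20, E21, E22, E23, E30, E31, E32, E33]
  have G32 : (Finset.sum Finset.univ fun b => R 3 b b 2) = 0 := by
    simp only [Fin.sum_univ_four, hz1, hz2, c10, c20, c21, c30, c31, c32, d10, d20, d21, d30, d31, d32, zero_mul, mul_zero, add_zero, zero_add, one_mul, mul_one, neg_mul, mul_neg, neg_neg, neg_zero, neg_add_rev]
    linarith [E00, E01, E02, E03, E10, E11, E12, E13, E20, E21, E22, E23, E30, E31, E32, E33]
  have G33 : (Finset.sum Finset.univ fun b => R 3 b b 3) = 0 := by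
    simp only [Fin.sum_univ_four, hz1, hz2, c10, c20, c21, c30, c31, c32, d10, d20, d21, d30, d31, d32, zero_mul, mul_zero, add_zero, zero_add, one_mul, mul_one, neg_mul, mul_neg, neg_neg, neg_zero, neg_add_rev]
    linarith [E00, E01, E02, E03, E10, E11, E12, E13, E20, E21, E22, E23, E30, E31, E32, E33]
  constructor
  · simp only [Fin.sum_univ_four, hz1, hz2, c10, c20, c21, c30, c31, c32, d10, d20, d21, d30, d31, d32, zero_mul, mul_zero, add_zero, zero_add, one_mul, mul_one, neg_mul, mul_neg, neg_neg, neg_zero, neg_add_rev]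
    linarith [E00, E11, E22, E33]
  · intro f d
    fin_cases f <;> fin_cases d
    · exact G00
    · exact G01
    · exact G02
    · exact G03
    · exact G10
    · exact G11
    · exact G12
    · exact G13
    · exact G20
    · exact G21
    · exact G22
    · exact G23
    · exact G30
    · exact G31
    · exact G32
    · exact G33
end

section
/- Let W5 : Fin 4 → Fin 4 → Fin 4 → Fin 4 → Fin 4 → ℝ, written W5 a b c d e (with e playing the role of a derivative index), satisfy for all indices: W5 a b c d e = −W5 b a c d e, W5 a b c d e = −W5 a b d c e, the pair-exchange symmetry W5 a b c d e = W5 c d a b e, and the first Bianchi identity W5 a b c d e + W5 a c d b e + W5 a d b c e = 0. Define C b c d := ∑_a W5 a b c d a. Then for all b, c, d ∈ Fin 4: ∑_{p,k,a} (∑_{n,m} W5 b c n m a * ε n m p k) * ε p k d a = ∑_{p,k} (∑_{n,m} C b n m * ε n m p k) * ε p k c d + ∑_{p,k} (∑_{n,m} C c n m * ε n m p k) * ε p k d b. -/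
/-- Integer-valued Levi-Civita symbol. -/
def epsZ (a b c d : Fin 4) : ℤ :=
  ∑ σ : Equiv.Perm (Fin 4),
    if σ 0 = a ∧ σ 1 = b ∧ σ 2 = c ∧ σ 3 = d then (Equiv.Perm.sign σ : ℤ) else 0

lemma levi_cast (a b c d : Fin 4) : levicivita a b c d = ((epsZ a b c d : ℤ) : ℝ) := by
  simp [levicivita, epsZ, apply_ite (Int.cast : ℤ → ℝ)]

theorem contrZ : ∀ n m e a : Fin 4, (∑ p, ∑ k, epsZ n m p k * epsZ p k e a) =
    2 * ((if n = e then 1 else 0) * (if m = a then 1 else 0)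
      - (if n = a then 1 else 0) * (if m = e then 1 else 0)) := by decide

lemma contrR (n m e a : Fin 4) :
    (∑ p, ∑ k, ((epsZ n m p k : ℤ) : ℝ) * ((epsZ p k e a : ℤ) : ℝ))
    = 2 * ((if n = e then (1:ℝ) else 0) * (if m = a then 1 else 0)
      - (if n = a then 1 else 0) * (if m = e then 1 else 0)) := by
  have h := contrZ n m e a
  have h2 : ((∑ p, ∑ k, epsZ n m p k * epsZ p k e a : ℤ) : ℝ)
      = ((2 * ((if n = e then 1 else 0) * (if m = a then 1 else 0)
      - (if n = a then 1 else 0) * (if m = e then 1 else 0)) : ℤ) : ℝ) := by rw [h]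
  push_cast at h2
  simpa [apply_ite (Int.cast : ℤ → ℝ)] using h2

lemma swap3 {M : Type*} [AddCommMonoid M] (f : Fin 4 → Fin 4 → Fin 4 → M) :
    ∑ x, ∑ y, ∑ z, f x y z = ∑ z, ∑ x, ∑ y, f x y z := by
  have h : ∀ x, ∑ y, ∑ z, f x y z = ∑ z, ∑ y, f x y z := fun x => Finset.sum_comm
  simp only [h]
  exact Finset.sum_comm

/-- Double dualization lemma: contracting a 2-tensor with two epsilons. -/
lemma dd (T : Fin 4 → Fin 4 → ℝ) (e a : Fin 4) :
    ∑ p, ∑ k, (∑ n, ∑ m, T n m * ((epsZ n m p k : ℤ) : ℝ)) * ((epsZ p k e a : ℤ) : ℝ)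
    = 2 * (T e a - T a e) := by
  have step1 : ∀ p k : Fin 4,
      (∑ n, ∑ m, T n m * ((epsZ n m p k : ℤ) : ℝ)) * ((epsZ p k e a : ℤ) : ℝ)
      = ∑ n, ∑ m, T n m * (((epsZ n m p k : ℤ) : ℝ) * ((epsZ p k e a : ℤ) : ℝ)) := by
    intro p k
    rw [Finset.sum_mul]
    refine Finset.sum_congr rfl fun n _ => ?_
    rw [Finset.sum_mul]
    exact Finset.sum_congr rfl fun m _ => by ring
  simp only [step1]
  rw [swap3 (fun p k n => ∑ m, T n m * (((epsZ n m p k : ℤ) : ℝ) * ((epsZ p k e a : ℤ) : ℝ)))]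
  have step2 : ∀ n : Fin 4,
      (∑ p, ∑ k, ∑ m, T n m * (((epsZ n m p k : ℤ) : ℝ) * ((epsZ p k e a : ℤ) : ℝ)))
      = ∑ m, T n m * ∑ p, ∑ k, ((epsZ n m p k : ℤ) : ℝ) * ((epsZ p k e a : ℤ) : ℝ) := by
    intro n
    rw [swap3 (fun p k m => T n m * (((epsZ n m p k : ℤ) : ℝ) * ((epsZ p k e a : ℤ) : ℝ)))]
    refine Finset.sum_congr rfl fun m _ => ?_
    rw [Finset.mul_sum]
    exact Finset.sum_congr rfl fun p _ => (Finset.mul_sum _ _ _).symm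
  simp only [step2, contrR]
  simp [Finset.mul_sum, mul_ite, ite_mul, mul_sub, mul_zero, mul_one, zero_mul,
    Finset.sum_sub_distrib, Finset.sum_ite_eq, Finset.sum_ite_eq']
  ring

/-- The relation (WCreld) between the dualized first derivative of the Weyl tensor and
the dualized Cotton tensor `C b c d = ∑ a, W5 a b c d a`. -/
theorem dual_weyl_cotton_relation (W5 : Fin 4 → Fin 4 → Fin 4 → Fin 4 → Fin 4 → ℝ)
    (h1 : ∀ a b c d e, W5 a b c d e = - W5 b a c d e)
    (h2 : ∀ a b c d e, W5 a b c d e = - W5 a b d c e)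
    (h3 : ∀ a b c d e, W5 a b c d e = W5 c d a b e)
    (h4 : ∀ a b c d e, W5 a b c d e + W5 a c d b e + W5 a d b c e = 0)
    (C : Fin 4 → Fin 4 → Fin 4 → ℝ)
    (hC : ∀ b c d, C b c d = ∑ a, W5 a b c d a)
    (b c d : Fin 4) :
    ∑ p, ∑ k, ∑ a,
        (∑ n, ∑ m, W5 b c n m a * levicivita n m p k) * levicivita p k d a
      = (∑ p, ∑ k, (∑ n, ∑ m, C b n m * levicivita n m p k) * levicivita p k c d)
        + ∑ p, ∑ k, (∑ n, ∑ m, C c n m * levicivita n m p k) * levicivita p k d b := by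
  simp only [levi_cast]
  rw [swap3 (fun p k a =>
    (∑ n, ∑ m, W5 b c n m a * ((epsZ n m p k : ℤ) : ℝ)) * ((epsZ p k d a : ℤ) : ℝ))]
  have L : (∑ a, ∑ p, ∑ k,
      (∑ n, ∑ m, W5 b c n m a * ((epsZ n m p k : ℤ) : ℝ)) * ((epsZ p k d a : ℤ) : ℝ))
      = ∑ a, 2 * (W5 b c d a a - W5 b c a d a) :=
    Finset.sum_congr rfl fun a _ => dd (fun n m => W5 b c n m a) d a
  rw [L, dd (fun n m => C b n m) c d, dd (fun n m => C c n m) d b]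
  simp only [hC]
  rw [← Finset.sum_sub_distrib, ← Finset.sum_sub_distrib, Finset.mul_sum, Finset.mul_sum,
    ← Finset.sum_add_distrib]
  exact Finset.sum_congr rfl fun a _ => by
    linarith [h2 b c a d a, h2 a b d c a, h2 a c b d a, h4 a b c d a, h3 a d b c a]
end
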